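/- arXiv:1810.05471 — 2 statements merged into one kernel-verified Lean document; each statement's English description precedes it below -/
import Mathlib

section
/- Let f : ℝ^n → ℝ be differentiable and let U, V : ℝ^n → [0, ∞) vanish at 0. Let x, x* ∈ ℝ^n and suppose the supremum defining the Fenchel conjugate f*(x*) = sup_z (⟨x*, z⟩ − f(z)) is attained at some z₀ ∈ ℝ^n. If f is U-convex, then f(x) + f*(x*) ≥ ⟨x*, x⟩ + U(x − z₀); if f is V-smooth, then f(x) + f*(x*) ≤ ⟨x*, x⟩ + V(x − z₀). -/
open scoped RealInnerProductSpace

noncomputable section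

abbrev Vec (d : ℕ) := EuclideanSpace ℝ (Fin d)

/-- Fenchel conjugate of a real-valued function, with values in `EReal`. -/
noncomputable def rconj {d : ℕ} (f : Vec d → ℝ) (u : Vec d) : EReal :=
  ⨆ x, ((⟪u, x⟫ - f x : ℝ) : EReal)

/-- generalized Fenchel–Young inequalities.
`f` is differentiable with gradient `f'`; `U, V : ℝ^n → [0,∞)` vanish at `0`;
the supremum defining `f*(x*)` is attained at `z₀`, so `f*(x*) = ⟪x*, z₀⟫ - f z₀`.
If `f` is `U`-convex then `f x + f*(x*) ≥ ⟪x*, x⟫ + U (x - z₀)`;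
if `f` is `V`-smooth then `f x + f*(x*) ≤ ⟪x*, x⟫ + V (x - z₀)`. -/
theorem stmt0 {n : ℕ} (f : Vec n → ℝ) (f' : Vec n → Vec n)
    (hdiff : ∀ x, HasGradientAt f (f' x) x)
    (U V : Vec n → ℝ)
    (hU0 : U 0 = 0) (hUnn : ∀ u, 0 ≤ U u)
    (hV0 : V 0 = 0) (hVnn : ∀ u, 0 ≤ V u)
    (x xs z₀ : Vec n)
    (hatt : rconj f xs = ((⟪xs, z₀⟫ - f z₀ : ℝ) : EReal)) :
    ((∀ a z : Vec n, U (z - a) ≤ f z - f a - ⟪f' a, z - a⟫) →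
      ⟪xs, x⟫ + U (x - z₀) ≤ f x + (⟪xs, z₀⟫ - f z₀)) ∧
    ((∀ a z : Vec n, f z - f a - ⟪f' a, z - a⟫ ≤ V (z - a)) →
      f x + (⟪xs, z₀⟫ - f z₀) ≤ ⟪xs, x⟫ + V (x - z₀)) := by
  -- z₀ is a global maximizer of g z = ⟪xs, z⟫ - f z
  have hmax : ∀ z, ⟪xs, z⟫ - f z ≤ ⟪xs, z₀⟫ - f z₀ := by
    intro z
    have h1 : ((⟪xs, z⟫ - f z : ℝ) : EReal) ≤ rconj f xs := le_iSup (fun w => ((⟪xs, w⟫ - f w : ℝ) : EReal)) z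
    rw [hatt] at h1
    exact_mod_cast h1
  -- the gradient of g at z₀ vanishes, so f' z₀ = xs
  have hg : HasFDerivAt (fun z : Vec n => ⟪xs, z⟫ - f z)
      ((innerSL ℝ xs : Vec n →L[ℝ] ℝ) - (InnerProductSpace.toDual ℝ (Vec n)) (f' z₀)) z₀ := by
    have h1 : HasFDerivAt (fun z : Vec n => ⟪xs, z⟫) (innerSL ℝ xs : Vec n →L[ℝ] ℝ) z₀ :=
      (innerSL ℝ xs).hasFDerivAt
    have h2 : HasFDerivAt f ((InnerProductSpace.toDual ℝ (Vec n)) (f' z₀)) z₀ :=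
      (hasGradientAt_iff_hasFDerivAt.mp (hdiff z₀))
    exact h1.sub h2
  have hzero : (innerSL ℝ xs : Vec n →L[ℝ] ℝ) - (InnerProductSpace.toDual ℝ (Vec n)) (f' z₀) = 0 := by
    exact IsLocalMax.hasFDerivAt_eq_zero (Filter.Eventually.of_forall hmax) hg
  have hfz : f' z₀ = xs := by
    apply ext_inner_right ℝ
    intro v
    have := congrArg (fun L => L v) hzero
    simp only [ContinuousLinearMap.sub_apply, innerSL_apply_apply, ContinuousLinearMap.zero_apply,
      InnerProductSpace.toDual_apply_apply] at this
    linarith [this]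
  constructor
  · intro hconv
    have := hconv z₀ x
    rw [hfz] at this
    have hin : ⟪xs, x - z₀⟫ = ⟪xs, x⟫ - ⟪xs, z₀⟫ := by rw [inner_sub_right]
    linarith
  · intro hsmooth
    have := hsmooth z₀ x
    rw [hfz] at this
    have hin : ⟪xs, x - z₀⟫ = ⟪xs, x⟫ - ⟪xs, z₀⟫ := by rw [inner_sub_right]
    linarith

end
end

section
/- Let f : ℝ^n → ℝ be differentiable with inf_z f(z) > −∞, let V : ℝ^n → [0, ∞) vanish at 0, and let x ∈ ℝ^n be such that f(z) − f(x) − ⟨∇f(x), z − x⟩ ≤ V(z − x) for all z ∈ ℝ^n. Then V*(−∇f(x)) ≤ f(x) − inf_z f(z), where V*(u) = sup_{w ∈ ℝ^n} (⟨u, w⟩ − V(w)). -/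
open scoped RealInnerProductSpace

noncomputable section

/-- Lemma: bounding the conjugate of the smoothness modulus at the
gradient.  If `f` is differentiable, bounded below, and `V`-smooth at `x`
(`V : ℝⁿ → [0,∞)` vanishing at `0`), then `V*(-∇f(x)) ≤ f(x) - inf f`. -/
theorem stmt6 {n : ℕ} (f : Vec n → ℝ) (f' : Vec n → Vec n)
    (hdiff : ∀ x, HasGradientAt f (f' x) x)
    (hbdd : BddBelow (Set.range f))
    (V : Vec n → ℝ) (hV0 : V 0 = 0) (hVnn : ∀ u, 0 ≤ V u)
    (x : Vec n)
    (hsm : ∀ z, f z - f x - ⟪f' x, z - x⟫ ≤ V (z - x)) :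
    rconj V (-(f' x)) ≤ ((f x - ⨅ z, f z : ℝ) : EReal) := by
  refine iSup_le fun w => ?_
  rw [EReal.coe_le_coe_iff]
  have h := hsm (x + w)
  simp only [add_sub_cancel_left] at h
  have hz : ⨅ z, f z ≤ f (x + w) := ciInf_le hbdd _
  have hn : ⟪-(f' x), w⟫ = -⟪f' x, w⟫ := inner_neg_left _ _
  linarith

end
end
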